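/- The rule (1→) is admissible in Lb*₁′: if the sequent Ψ(Λ) → C is derivable in Lb*₁′ (where Ψ(Λ) denotes a meta-formula with a designated occurrence of the empty meta-formula Λ), then the sequent Ψ(1) → C, obtained by replacing that occurrence by the unit constant 1, is also derivable in Lb*₁′. -/
import Mathlib


/-! Formulas of the Lambek calculus with brackets (and the unit constant `one`,
which is used only in the calculus Lb*₁). Variables are indexed by `ℕ`. -/
inductive Fm : Type
  | var : ℕ → Fm            -- variables p₁, p₂, …
  | one : Fm                 -- the unit constant 𝟏
  | ldiv : Fm → Fm → Fm      -- `ldiv A B` is A \ B (left division)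
  | rdiv : Fm → Fm → Fm      -- `rdiv B A` is B / A (right division)
  | mul : Fm → Fm → Fm       -- `mul A B` is A · B (product)
  | dia : Fm → Fm            -- ⟨⟩A
  | box : Fm → Fm            -- []⁻¹A

/-- Meta-formulas are lists of items; an item is a formula or a bracketed
meta-formula.  The comma is list append (hence associative with unit `[]`, the
empty meta-formula Λ). -/
inductive Item : Type
  | fm : Fm → Item
  | br : List Item → Item

/-- One-hole contexts Δ(·) in meta-formulas: the hole is a designated
occurrence of a sub-meta-formula, possibly under brackets. -/
inductive Ctx : Type
  | hole : List Item → List Item → Ctx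
  | br : List Item → Ctx → List Item → Ctx

/-- Plugging a meta-formula into the hole of a context. -/
def Ctx.plug : Ctx → List Item → List Item
  | .hole l r, Γ => l ++ Γ ++ r
  | .br l c r, Γ => l ++ Item.br (c.plug Γ) :: r

/-- Derivability in the Lambek calculus with brackets Lb* (no unit rules). -/
inductive LbS : List Item → Fm → Prop
  | ax (p : ℕ) : LbS [.fm (.var p)] (.var p)
  | ldiv_l (Γ : List Item) (Δ : Ctx) (A B C : Fm) :
      LbS Γ A → LbS (Δ.plug [.fm B]) C → LbS (Δ.plug (Γ ++ [.fm (.ldiv A B)])) C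
  | ldiv_r (Γ : List Item) (A B : Fm) :
      LbS (.fm A :: Γ) B → LbS Γ (.ldiv A B)
  | rdiv_l (Γ : List Item) (Δ : Ctx) (A B C : Fm) :
      LbS Γ A → LbS (Δ.plug [.fm B]) C → LbS (Δ.plug (.fm (.rdiv B A) :: Γ)) C
  | rdiv_r (Γ : List Item) (A B : Fm) :
      LbS (Γ ++ [.fm A]) B → LbS Γ (.rdiv B A)
  | mul_l (Δ : Ctx) (A B C : Fm) :
      LbS (Δ.plug [.fm A, .fm B]) C → LbS (Δ.plug [.fm (.mul A B)]) C
  | mul_r (Γ Θ : List Item) (A B : Fm) :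
      LbS Γ A → LbS Θ B → LbS (Γ ++ Θ) (.mul A B)
  | dia_l (Δ : Ctx) (A C : Fm) :
      LbS (Δ.plug [.br [.fm A]]) C → LbS (Δ.plug [.fm (.dia A)]) C
  | dia_r (Γ : List Item) (A : Fm) :
      LbS Γ A → LbS [.br Γ] (.dia A)
  | box_l (Δ : Ctx) (A C : Fm) :
      LbS (Δ.plug [.fm A]) C → LbS (Δ.plug [.br [.fm (.box A)]]) C
  | box_r (Γ : List Item) (A : Fm) :
      LbS [.br Γ] A → LbS Γ (.box A)

/-- Derivability in the Lambek calculus with brackets and the unit, Lb*₁. -/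
inductive Lb1 : List Item → Fm → Prop
  | ax (p : ℕ) : Lb1 [.fm (.var p)] (.var p)
  | ldiv_l (Γ : List Item) (Δ : Ctx) (A B C : Fm) :
      Lb1 Γ A → Lb1 (Δ.plug [.fm B]) C → Lb1 (Δ.plug (Γ ++ [.fm (.ldiv A B)])) C
  | ldiv_r (Γ : List Item) (A B : Fm) :
      Lb1 (.fm A :: Γ) B → Lb1 Γ (.ldiv A B)
  | rdiv_l (Γ : List Item) (Δ : Ctx) (A B C : Fm) :
      Lb1 Γ A → Lb1 (Δ.plug [.fm B]) C → Lb1 (Δ.plug (.fm (.rdiv B A) :: Γ)) C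
  | rdiv_r (Γ : List Item) (A B : Fm) :
      Lb1 (Γ ++ [.fm A]) B → Lb1 Γ (.rdiv B A)
  | mul_l (Δ : Ctx) (A B C : Fm) :
      Lb1 (Δ.plug [.fm A, .fm B]) C → Lb1 (Δ.plug [.fm (.mul A B)]) C
  | mul_r (Γ Θ : List Item) (A B : Fm) :
      Lb1 Γ A → Lb1 Θ B → Lb1 (Γ ++ Θ) (.mul A B)
  | dia_l (Δ : Ctx) (A C : Fm) :
      Lb1 (Δ.plug [.br [.fm A]]) C → Lb1 (Δ.plug [.fm (.dia A)]) C
  | dia_r (Γ : List Item) (A : Fm) :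
      Lb1 Γ A → Lb1 [.br Γ] (.dia A)
  | box_l (Δ : Ctx) (A C : Fm) :
      Lb1 (Δ.plug [.fm A]) C → Lb1 (Δ.plug [.br [.fm (.box A)]]) C
  | box_r (Γ : List Item) (A : Fm) :
      Lb1 [.br Γ] A → Lb1 Γ (.box A)
  | one_l (Δ : Ctx) (C : Fm) :
      Lb1 (Δ.plug []) C → Lb1 (Δ.plug [.fm .one]) C
  | one_r : Lb1 [] .one

/-- `ones n` is the meta-formula 𝟏ⁿ = 𝟏, 𝟏, …, 𝟏 (n times). -/
def ones (n : ℕ) : List Item := List.replicate n (.fm .one)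

/-- Derivability in the modified calculus Lb*₁′: the rule (𝟏→) is removed and
the axioms (→𝟏), (ax) and the rules (→⟨⟩), ([]⁻¹→) are replaced by their
primed versions; all other rules of Lb*₁ are kept intact. -/
inductive Lb1' : List Item → Fm → Prop
  | ax' (k m p : ℕ) :
      Lb1' (ones k ++ .fm (.var p) :: ones m) (.var p)
  | one_r' (k : ℕ) : Lb1' (ones k) .one
  | ldiv_l (Γ : List Item) (Δ : Ctx) (A B C : Fm) :
      Lb1' Γ A → Lb1' (Δ.plug [.fm B]) C → Lb1' (Δ.plug (Γ ++ [.fm (.ldiv A B)])) C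
  | ldiv_r (Γ : List Item) (A B : Fm) :
      Lb1' (.fm A :: Γ) B → Lb1' Γ (.ldiv A B)
  | rdiv_l (Γ : List Item) (Δ : Ctx) (A B C : Fm) :
      Lb1' Γ A → Lb1' (Δ.plug [.fm B]) C → Lb1' (Δ.plug (.fm (.rdiv B A) :: Γ)) C
  | rdiv_r (Γ : List Item) (A B : Fm) :
      Lb1' (Γ ++ [.fm A]) B → Lb1' Γ (.rdiv B A)
  | mul_l (Δ : Ctx) (A B C : Fm) :
      Lb1' (Δ.plug [.fm A, .fm B]) C → Lb1' (Δ.plug [.fm (.mul A B)]) C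
  | mul_r (Γ Θ : List Item) (A B : Fm) :
      Lb1' Γ A → Lb1' Θ B → Lb1' (Γ ++ Θ) (.mul A B)
  | dia_l (Δ : Ctx) (A C : Fm) :
      Lb1' (Δ.plug [.br [.fm A]]) C → Lb1' (Δ.plug [.fm (.dia A)]) C
  | dia_r' (k m : ℕ) (Γ : List Item) (A : Fm) :
      Lb1' Γ (.dia A) → Lb1' (ones k ++ .br Γ :: ones m) (.dia A)
  | box_l' (k m : ℕ) (Δ : Ctx) (B C : Fm) :
      Lb1' (Δ.plug [.fm B]) C →
      Lb1' (Δ.plug [.br (ones k ++ .fm (.box B) :: ones m)]) C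
  | box_r (Γ : List Item) (A : Fm) :
      Lb1' [.br Γ] A → Lb1' Γ (.box A)

/-- The formula q \ q. -/
def qq (q : ℕ) : Fm := .ldiv (.var q) (.var q)

mutual
/-- The translation τ⁺ (for positive occurrences), with distinguished variable q. -/
def tauP (q : ℕ) : Fm → Fm
  | .one => qq q
  | .var p => .mul (.mul (qq q) (.var p)) (qq q)
  | .ldiv A B => .ldiv (tauM q A) (tauP q B)
  | .rdiv B A => .rdiv (tauP q B) (tauP q A)
  | .mul A B => .mul (tauP q A) (tauP q B)
  | .dia A => .mul (.mul (qq q) (.dia (tauP q A))) (qq q)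
  | .box A => .box (tauM q A)
/-- The translation τ⁻ (for negative occurrences), with distinguished variable q. -/
def tauM (q : ℕ) : Fm → Fm
  | .one => qq q
  | .var p => .var p
  | .ldiv A B => .ldiv (tauM q A) (tauM q B)
  | .rdiv B A => .rdiv (tauM q B) (tauP q A)
  | .mul A B => .mul (tauM q A) (tauM q B)
  | .dia A => .dia (tauM q A)
  | .box A => .ldiv (qq q) (.rdiv (.box (tauM q A)) (qq q))
end

mutual
/-- τ⁻ on items of meta-formulas. -/
def tauItem (q : ℕ) : Item → Item
  | .fm A => .fm (tauM q A)
  | .br Γ => .br (tauMeta q Γ)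
/-- τ⁻ on meta-formulas. -/
def tauMeta (q : ℕ) : List Item → List Item
  | [] => []
  | i :: Γ => tauItem q i :: tauMeta q Γ
end

/-- The variable q does not occur in a formula. -/
def Fm.qFree (q : ℕ) : Fm → Prop
  | .var p => p ≠ q
  | .one => True
  | .ldiv A B => A.qFree q ∧ B.qFree q
  | .rdiv B A => B.qFree q ∧ A.qFree q
  | .mul A B => A.qFree q ∧ B.qFree q
  | .dia A => A.qFree q
  | .box A => A.qFree q

mutual
/-- The variable q does not occur in an item. -/
def Item.qFree (q : ℕ) : Item → Prop
  | .fm A => A.qFree q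
  | .br Γ => MetaQFree q Γ
/-- The variable q does not occur in a meta-formula. -/
def MetaQFree (q : ℕ) : List Item → Prop
  | [] => True
  | i :: Γ => i.qFree q ∧ MetaQFree q Γ
end

/-- Substitution of the formula E for the variable q in a formula (the unit
constant is not affected). -/
def Fm.subst (q : ℕ) (E : Fm) : Fm → Fm
  | .var p => if p = q then E else .var p
  | .one => .one
  | .ldiv A B => .ldiv (Fm.subst q E A) (Fm.subst q E B)
  | .rdiv B A => .rdiv (Fm.subst q E B) (Fm.subst q E A)
  | .mul A B => .mul (Fm.subst q E A) (Fm.subst q E B)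
  | .dia A => .dia (Fm.subst q E A)
  | .box A => .box (Fm.subst q E A)

mutual
/-- Substitution of E for the variable q in an item. -/
def Item.subst (q : ℕ) (E : Fm) : Item → Item
  | .fm A => .fm (Fm.subst q E A)
  | .br Γ => .br (Meta.subst q E Γ)
/-- Substitution of E for the variable q in a meta-formula. -/
def Meta.subst (q : ℕ) (E : Fm) : List Item → List Item
  | [] => []
  | i :: Γ => Item.subst q E i :: Meta.subst q E Γ
end

/-- A formula contains no occurrence of the unit constant (i.e. it is an
Lb*-formula). -/
def Fm.unitFree : Fm → Prop
  | .var _ => True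
  | .one => False
  | .ldiv A B => A.unitFree ∧ B.unitFree
  | .rdiv B A => B.unitFree ∧ A.unitFree
  | .mul A B => A.unitFree ∧ B.unitFree
  | .dia A => A.unitFree
  | .box A => A.unitFree

mutual
/-- The yield of an item: erase all brackets. -/
def Item.yield : Item → List Fm
  | .fm A => [A]
  | .br Γ => yieldMeta Γ
/-- The yield of a meta-formula: the list of its formulas, with all brackets erased. -/
def yieldMeta : List Item → List Fm
  | [] => []
  | i :: Γ => i.yield ++ yieldMeta Γ
end

/-- A categorial grammar over the alphabet α: a lexical relation ▷ between
letters and formulas, and a target formula H. -/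
structure Grammar (α : Type) where
  rel : α → Fm → Prop
  target : Fm

/-- The lexical relation of the grammar is finite. -/
def Grammar.Finite {α : Type} (G : Grammar α) : Prop :=
  {p : α × Fm | G.rel p.1 p.2}.Finite

/-- The grammar is an Lb*-grammar: no occurrence of the unit constant. -/
def Grammar.UnitFree {α : Type} (G : Grammar α) : Prop :=
  G.target.unitFree ∧ ∀ a A, G.rel a A → A.unitFree

/-- The variable q does not occur in the grammar. -/
def Grammar.AvoidsVar {α : Type} (q : ℕ) (G : Grammar α) : Prop :=
  G.target.qFree q ∧ ∀ a A, G.rel a A → A.qFree q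

/-- The translated grammar: τ⁻ applied to all formulas in the lexical
relation and τ⁺ to the target formula. -/
def Grammar.translate {α : Type} (q : ℕ) (G : Grammar α) : Grammar α :=
  ⟨fun a A => ∃ B, G.rel a B ∧ A = tauM q B, tauP q G.target⟩

/-- The language t-generated by a grammar, relative to a derivability
relation D: a word a₁…aₙ is t-accepted if aᵢ ▷ Aᵢ for some formulas Aᵢ and
some meta-formula Γ with yield A₁,…,Aₙ is derivably mapped to the target. -/
def tLang {α : Type} (D : List Item → Fm → Prop) (G : Grammar α) : Set (List α) :=
  {w | ∃ As : List Fm, List.Forall₂ G.rel w As ∧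
        ∃ Γ : List Item, D Γ G.target ∧ yieldMeta Γ = As}

/-- The language s-generated by a grammar, relative to a derivability
relation D: a word a₁…aₙ is s-accepted if aᵢ ▷ Aᵢ for some formulas Aᵢ such
that the bracket-free sequent A₁,…,Aₙ → H is derivable. -/
def sLang {α : Type} (D : List Item → Fm → Prop) (G : Grammar α) : Set (List α) :=
  {w | ∃ As : List Fm, List.Forall₂ G.rel w As ∧ D (As.map Item.fm) G.target}


/-! ### Auxiliary development: admissibility of (𝟏→) via an insertion relation -/

/-- `Ins Γ Γ'` : `Γ'` is obtained from `Γ` by inserting one occurrence of the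
unit constant, possibly under brackets. -/
inductive Ins : List Item → List Item → Prop
  | head (r : List Item) : Ins r (.fm .one :: r)
  | cons (i : Item) {l l' : List Item} : Ins l l' → Ins (i :: l) (i :: l')
  | br {Γ Γ' : List Item} (r : List Item) : Ins Γ Γ' → Ins (.br Γ :: r) (.br Γ' :: r)

lemma ins_append_right {l l' : List Item} (h : Ins l l') (r : List Item) :
    Ins (l ++ r) (l' ++ r) := by
  induction h with
  | head s => exact Ins.head (s ++ r)
  | cons i _ ih => exact Ins.cons i ih
  | br s hM _ => exact Ins.br (s ++ r) hM

lemma ins_append_left (l : List Item) {r r' : List Item} (h : Ins r r') :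
    Ins (l ++ r) (l ++ r') := by
  induction l with
  | nil => simpa using h
  | cons i t ih => exact Ins.cons i ih

lemma ins_snoc (l : List Item) : Ins l (l ++ [.fm .one]) := by
  induction l with
  | nil => exact Ins.head []
  | cons i t ih => exact Ins.cons i ih

lemma ins_split {Γ : List Item} (l r : List Item) (h : Ins (l ++ r) Γ) :
    (∃ l', Ins l l' ∧ Γ = l' ++ r) ∨ (∃ r', Ins r r' ∧ Γ = l ++ r') := by
  induction l generalizing Γ with
  | nil => exact Or.inr ⟨Γ, h, rfl⟩
  | cons i t ih =>
    cases h with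
    | head => exact Or.inl ⟨.fm .one :: i :: t, Ins.head _, rfl⟩
    | cons _ h' =>
      rcases ih h' with ⟨l', hl, rfl⟩ | ⟨r', hr, rfl⟩
      · exact Or.inl ⟨i :: l', Ins.cons i hl, rfl⟩
      · exact Or.inr ⟨r', hr, rfl⟩
    | br _ hM => exact Or.inl ⟨_ :: t, Ins.br t hM, rfl⟩

lemma ins_ones {k : ℕ} {Γ : List Item} (h : Ins (ones k) Γ) : Γ = ones (k + 1) := by
  induction k generalizing Γ with
  | zero => cases h with | head => rfl
  | succ n ih =>
    rw [show ones (n + 1) = .fm .one :: ones n from rfl] at h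
    cases h with
    | head => rfl
    | cons _ h' => rw [ih h']; rfl

lemma ones_append_one (k : ℕ) (X : List Item) :
    ones k ++ .fm .one :: X = ones (k + 1) ++ X := by
  simp [ones, List.replicate_succ']

lemma ins_ones_mid {k m : ℕ} {i : Item} {Γ : List Item}
    (h : Ins (ones k ++ i :: ones m) Γ) :
    (∃ k', Γ = ones k' ++ i :: ones m) ∨ (∃ m', Γ = ones k ++ i :: ones m') ∨
    (∃ M M', i = .br M ∧ Ins M M' ∧ Γ = ones k ++ .br M' :: ones m) := by
  rcases ins_split (ones k) (i :: ones m) h with ⟨l', hl, rfl⟩ | ⟨ρ, hρ, rfl⟩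
  · exact Or.inl ⟨k + 1, by rw [ins_ones hl]⟩
  · cases hρ with
    | head => exact Or.inl ⟨k + 1, ones_append_one k _⟩
    | cons _ h' => exact Or.inr (Or.inl ⟨m + 1, by rw [ins_ones h']⟩)
    | br _ hM => exact Or.inr (Or.inr ⟨_, _, rfl, hM, rfl⟩)

/-- Extending a context by extra material on both sides of the hole. -/
def Ctx.extend : Ctx → List Item → List Item → Ctx
  | .hole l r, a, b => .hole (l ++ a) (b ++ r)
  | .br l c r, a, b => .br l (c.extend a b) r

lemma extend_plug (Δ : Ctx) (a b Z : List Item) :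
    (Δ.extend a b).plug Z = Δ.plug (a ++ Z ++ b) := by
  induction Δ with
  | hole l r => simp [Ctx.extend, Ctx.plug]
  | br l c r ih => simp [Ctx.extend, Ctx.plug, ih]

lemma ins_plug_inner {X X' : List Item} (Δ : Ctx) (h : Ins X X') :
    Ins (Δ.plug X) (Δ.plug X') := by
  induction Δ with
  | hole l r =>
    simp only [Ctx.plug, List.append_assoc]
    exact ins_append_left l (ins_append_right h r)
  | br l c r ih =>
    simp only [Ctx.plug]
    exact ins_append_left l (Ins.br r ih)

lemma ins_plug_split {Γ'' : List Item} (Δ : Ctx) (X : List Item)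
    (h : Ins (Δ.plug X) Γ'') :
    (∃ Δ' : Ctx, Γ'' = Δ'.plug X ∧ ∀ Y, Ins (Δ.plug Y) (Δ'.plug Y)) ∨
    (∃ X', Ins X X' ∧ Γ'' = Δ.plug X') := by
  induction Δ generalizing Γ'' with
  | hole l r =>
    simp only [Ctx.plug, List.append_assoc] at h
    rcases ins_split l (X ++ r) h with ⟨l', hl, rfl⟩ | ⟨ρ, hρ, rfl⟩
    · refine Or.inl ⟨.hole l' r, by simp [Ctx.plug, List.append_assoc], fun Y => ?_⟩
      simpa [Ctx.plug, List.append_assoc] using ins_append_right hl (Y ++ r)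
    · rcases ins_split X r hρ with ⟨X', hX, rfl⟩ | ⟨r', hr, rfl⟩
      · exact Or.inr ⟨X', hX, by simp [Ctx.plug, List.append_assoc]⟩
      · refine Or.inl ⟨.hole l r', by simp [Ctx.plug, List.append_assoc], fun Y => ?_⟩
        simpa [Ctx.plug, List.append_assoc] using ins_append_left l (ins_append_left Y hr)
  | br l c r ih =>
    simp only [Ctx.plug] at h
    rcases ins_split l (Item.br (c.plug X) :: r) h with ⟨l', hl, rfl⟩ | ⟨ρ, hρ, rfl⟩
    · refine Or.inl ⟨.br l' c r, rfl, fun Y => ?_⟩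
      simpa [Ctx.plug, List.append_assoc] using ins_append_right hl (Item.br (c.plug Y) :: r)
    · cases hρ with
      | head =>
        refine Or.inl ⟨.br (l ++ [.fm .one]) c r, by simp [Ctx.plug], fun Y => ?_⟩
        simpa [Ctx.plug, List.append_assoc] using ins_append_left l (Ins.head (Item.br (c.plug Y) :: r))
      | cons _ hr =>
        refine Or.inl ⟨.br l c _, rfl, fun Y => ?_⟩
        simpa [Ctx.plug, List.append_assoc] using ins_append_left l (Ins.cons (Item.br (c.plug Y)) hr)
      | br _ hM =>
        rcases ih hM with ⟨c', rfl, prop⟩ | ⟨X', hX, hEq⟩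
        · refine Or.inl ⟨.br l c' r, rfl, fun Y => ?_⟩
          simpa [Ctx.plug, List.append_assoc] using ins_append_left l (Ins.br r (prop Y))
        · subst hEq
          exact Or.inr ⟨X', hX, rfl⟩


lemma ins_admissible {Γ : List Item} {C : Fm} (h : Lb1' Γ C) :
    ∀ {Γ' : List Item}, Ins Γ Γ' → Lb1' Γ' C := by
  induction h with
  | ax' k m p =>
    intro Γ' hins
    rcases ins_ones_mid hins with ⟨k', rfl⟩ | ⟨m', rfl⟩ | ⟨M, M', hM, -, -⟩
    · exact Lb1'.ax' k' m p
    · exact Lb1'.ax' k m' p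
    · cases hM
  | one_r' k =>
    intro Γ' hins
    rw [ins_ones hins]
    exact Lb1'.one_r' (k + 1)
  | ldiv_l Γ Δ A B C h1 h2 ih1 ih2 =>
    intro Γ'' hins
    rcases ins_plug_split Δ _ hins with ⟨Δ', rfl, prop⟩ | ⟨X', hX, rfl⟩
    · exact Lb1'.ldiv_l Γ Δ' A B C h1 (ih2 (prop [.fm B]))
    · rcases ins_split Γ [.fm (.ldiv A B)] hX with ⟨Γ', hΓ, rfl⟩ | ⟨ρ, hρ, rfl⟩
      · exact Lb1'.ldiv_l Γ' Δ A B C (ih1 hΓ) h2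
      · cases hρ with
        | head =>
          have := Lb1'.ldiv_l (Γ ++ [.fm .one]) Δ A B C (ih1 (ins_snoc Γ)) h2
          simpa [List.append_assoc] using this
        | cons _ h' =>
          cases h' with
          | head =>
            have hprem : Lb1' ((Δ.extend [] [.fm .one]).plug [.fm B]) C := by
              apply ih2
              rw [extend_plug]
              simpa using ins_plug_inner Δ (ins_snoc [.fm B])
            have := Lb1'.ldiv_l Γ (Δ.extend [] [.fm .one]) A B C h1 hprem
            rw [extend_plug] at this
            simpa [List.append_assoc] using this
  | ldiv_r Γ A B h ih =>
    intro Γ'' hins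
    exact Lb1'.ldiv_r Γ'' A B (ih (Ins.cons _ hins))
  | rdiv_l Γ Δ A B C h1 h2 ih1 ih2 =>
    intro Γ'' hins
    rcases ins_plug_split Δ _ hins with ⟨Δ', rfl, prop⟩ | ⟨X', hX, rfl⟩
    · exact Lb1'.rdiv_l Γ Δ' A B C h1 (ih2 (prop [.fm B]))
    · cases hX with
      | head =>
        have hprem : Lb1' ((Δ.extend [.fm .one] []).plug [.fm B]) C := by
          apply ih2
          rw [extend_plug]
          simpa using ins_plug_inner Δ (Ins.head [.fm B])
        have := Lb1'.rdiv_l Γ (Δ.extend [.fm .one] []) A B C h1 hprem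
        rw [extend_plug] at this
        simpa [List.append_assoc] using this
      | cons _ h' =>
        exact Lb1'.rdiv_l _ Δ A B C (ih1 h') h2
  | rdiv_r Γ A B h ih =>
    intro Γ'' hins
    exact Lb1'.rdiv_r Γ'' A B (ih (ins_append_right hins [.fm A]))
  | mul_l Δ A B C h ih =>
    intro Γ'' hins
    rcases ins_plug_split Δ _ hins with ⟨Δ', rfl, prop⟩ | ⟨X', hX, rfl⟩
    · exact Lb1'.mul_l Δ' A B C (ih (prop [.fm A, .fm B]))
    · cases hX with
      | head =>
        have hprem : Lb1' ((Δ.extend [.fm .one] []).plug [.fm A, .fm B]) C := by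
          apply ih
          rw [extend_plug]
          simpa using ins_plug_inner Δ (Ins.head [.fm A, .fm B])
        have := Lb1'.mul_l (Δ.extend [.fm .one] []) A B C hprem
        rw [extend_plug] at this
        simpa using this
      | cons _ h' =>
        cases h' with
        | head =>
          have hprem : Lb1' ((Δ.extend [] [.fm .one]).plug [.fm A, .fm B]) C := by
            apply ih
            rw [extend_plug]
            simpa using ins_plug_inner Δ (ins_snoc [.fm A, .fm B])
          have := Lb1'.mul_l (Δ.extend [] [.fm .one]) A B C hprem
          rw [extend_plug] at this
          simpa using this
  | mul_r Γ Θ A B h1 h2 ih1 ih2 =>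
    intro Γ'' hins
    rcases ins_split Γ Θ hins with ⟨Γ', hΓ, rfl⟩ | ⟨Θ', hΘ, rfl⟩
    · exact Lb1'.mul_r Γ' Θ A B (ih1 hΓ) h2
    · exact Lb1'.mul_r Γ Θ' A B h1 (ih2 hΘ)
  | dia_l Δ A C h ih =>
    intro Γ'' hins
    rcases ins_plug_split Δ _ hins with ⟨Δ', rfl, prop⟩ | ⟨X', hX, rfl⟩
    · exact Lb1'.dia_l Δ' A C (ih (prop [.br [.fm A]]))
    · cases hX with
      | head =>
        have hprem : Lb1' ((Δ.extend [.fm .one] []).plug [.br [.fm A]]) C := by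
          apply ih
          rw [extend_plug]
          simpa using ins_plug_inner Δ (Ins.head [.br [.fm A]])
        have := Lb1'.dia_l (Δ.extend [.fm .one] []) A C hprem
        rw [extend_plug] at this
        simpa using this
      | cons _ h' =>
        cases h' with
        | head =>
          have hprem : Lb1' ((Δ.extend [] [.fm .one]).plug [.br [.fm A]]) C := by
            apply ih
            rw [extend_plug]
            simpa using ins_plug_inner Δ (ins_snoc [.br [.fm A]])
          have := Lb1'.dia_l (Δ.extend [] [.fm .one]) A C hprem
          rw [extend_plug] at this
          simpa using this
  | dia_r' k m Γ A h ih =>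
    intro Γ'' hins
    rcases ins_ones_mid hins with ⟨k', rfl⟩ | ⟨m', rfl⟩ | ⟨M, M', hM, hMM, rfl⟩
    · exact Lb1'.dia_r' k' m Γ A h
    · exact Lb1'.dia_r' k m' Γ A h
    · cases hM
      exact Lb1'.dia_r' k m M' A (ih hMM)
  | box_l' k m Δ B C h ih =>
    intro Γ'' hins
    rcases ins_plug_split Δ _ hins with ⟨Δ', rfl, prop⟩ | ⟨X', hX, rfl⟩
    · exact Lb1'.box_l' k m Δ' B C (ih (prop [.fm B]))
    · cases hX with
      | head =>
        have hprem : Lb1' ((Δ.extend [.fm .one] []).plug [.fm B]) C := by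
          apply ih
          rw [extend_plug]
          simpa using ins_plug_inner Δ (Ins.head [.fm B])
        have := Lb1'.box_l' k m (Δ.extend [.fm .one] []) B C hprem
        rw [extend_plug] at this
        simpa using this
      | cons _ h' =>
        cases h' with
        | head =>
          have hprem : Lb1' ((Δ.extend [] [.fm .one]).plug [.fm B]) C := by
            apply ih
            rw [extend_plug]
            simpa using ins_plug_inner Δ (ins_snoc [.fm B])
          have := Lb1'.box_l' k m (Δ.extend [] [.fm .one]) B C hprem
          rw [extend_plug] at this
          simpa using this
      | br _ hM =>
        rcases ins_ones_mid hM with ⟨k', rfl⟩ | ⟨m', rfl⟩ | ⟨N, N', hN, -, -⟩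
        · exact Lb1'.box_l' k' m Δ B C h
        · exact Lb1'.box_l' k m' Δ B C h
        · cases hN
  | box_r Γ A h ih =>
    intro Γ'' hins
    exact Lb1'.box_r Γ'' A (ih (Ins.br [] hins))

/-- The rule (𝟏→) is admissible in Lb*₁′: if Ψ(Λ) → C is
derivable in Lb*₁′, then Ψ(𝟏) → C is derivable in Lb*₁′. -/
theorem one_left_admissible_Lb1' (Ψ : Ctx) (C : Fm)
    (h : Lb1' (Ψ.plug []) C) :
    Lb1' (Ψ.plug [.fm .one]) C :=
  ins_admissible h (ins_plug_inner Ψ (Ins.head []))
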